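/- Let P_s be a sign pattern on n nodes and let V_C ⊆ V be a signed zero forcing set of P_s. Then for every A ∈ Q_s(P_s) and every ν ∈ ℝ^n with ν^T A = 0 and ν_j = 0 for all j ∈ V_C, one has ν = 0. By the PBH test, this means the eigenvalue 0 (whenever it is an eigenvalue) of every A ∈ Q_s(P_s) is a controllable eigenvalue of the pair (A, B), where B has columns e_j for j ∈ V_C. -/

import Mathlib

/-- An entry of a sign pattern: `+`, `-`, `0`, or `?` (unrestricted). -/
inductive SignPatEntry : Type
  | pos | neg | zero | unk
deriving DecidableEq

namespace SignPatEntry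

/-- Sign inversion: `inv(+) = -`, `inv(-) = +`. -/
def inv : SignPatEntry → SignPatEntry
  | pos => neg
  | neg => pos
  | zero => zero
  | unk => unk

/-- Product of signs (used as `s · P(u,v)`). -/
def mul : SignPatEntry → SignPatEntry → SignPatEntry
  | pos, y => y
  | neg, y => y.inv
  | zero, _ => zero
  | unk, _ => unk

end SignPatEntry

/-- A real number matches a sign-pattern entry. -/
def matchesSign : SignPatEntry → ℝ → Prop
  | .pos, a => 0 < a
  | .neg, a => a < 0
  | .zero, a => a = 0
  | .unk, _ => True

/-- The qualitative class of a sign pattern: real matrices whose entries have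
the prescribed signs. -/
def QClass {n : ℕ} (P : Fin n → Fin n → SignPatEntry)
    (A : Matrix (Fin n) (Fin n) ℝ) : Prop :=
  ∀ i j : Fin n, matchesSign (P i j) (A i j)

/-- A configuration of the signing-and-coloring game: a set of black nodes and a
partial marking of nodes with signs. -/
structure Config (n : ℕ) where
  black : Finset (Fin n)
  mark : Fin n → Option SignPatEntry

/-- The set of white out-neighbors of `v` (out-neighbors of `v` are the `u` with
`P u v ≠ 0`). -/
def Wset {n : ℕ} (P : Fin n → Fin n → SignPatEntry) (c : Config n) (v : Fin n) :
    Finset (Fin n) :=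
  Finset.univ.filter (fun u => u ∉ c.black ∧ P u v ≠ SignPatEntry.zero)

/-- One step of the signing and coloring rule, played on the pattern `P`. -/
inductive Step {n : ℕ} (P : Fin n → Fin n → SignPatEntry) : Config n → Config n → Prop
  /-- (1) a pivot node `v` with a single white out-neighbor `u` forces `u` black. -/
  | force1 (c : Config n) (v u : Fin n)
      (hv : v ∈ c.black ∨ P v v ≠ SignPatEntry.unk)
      (hW : Wset P c v = {u}) :
      Step P c ⟨insert u c.black, c.mark⟩
  /-- (2) if all white out-neighbors of a pivot `v` are marked consistently
  (all with `m(u) = P(u,v)` or all with `m(u) = -P(u,v)`), they all become black. -/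
  | force2 (c : Config n) (v : Fin n)
      (hv : v ∈ c.black ∨ P v v ≠ SignPatEntry.unk)
      (hall : (∀ u ∈ Wset P c v, c.mark u = some (P u v)) ∨
              (∀ u ∈ Wset P c v, c.mark u = some (P u v).inv)) :
      Step P c ⟨c.black ∪ Wset P c v, c.mark⟩
  /-- (3) if exactly one white out-neighbor `w` of a pivot `v` is unmarked, at least one
  is marked, and every marked one satisfies `m(u) = s · P(u,v)`, then `w` gets
  marked with `-s · P(w,v)`. -/
  | force3 (c : Config n) (v w : Fin n) (s : SignPatEntry)
      (hv : v ∈ c.black ∨ P v v ≠ SignPatEntry.unk)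
      (hs : s = SignPatEntry.pos ∨ s = SignPatEntry.neg)
      (hw : w ∈ Wset P c v) (hwnone : c.mark w = none)
      (hmarked : ∀ u ∈ Wset P c v, u ≠ w → c.mark u = some (s.mul (P u v)))
      (hex : ∃ u ∈ Wset P c v, u ≠ w) :
      Step P c ⟨c.black, Function.update c.mark w (some (s.inv.mul (P w v)))⟩
  /-- (4) if no white node is marked, an arbitrary white node may be marked `+`. -/
  | force4 (c : Config n) (u : Fin n)
      (hnomark : ∀ x : Fin n, x ∉ c.black → c.mark x = none)
      (hu : u ∉ c.black) :
      Step P c ⟨c.black, Function.update c.mark u (some SignPatEntry.pos)⟩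

/-- The initial configuration: black set `Z`, no marks. -/
def initConfig {n : ℕ} (Z : Finset (Fin n)) : Config n := ⟨Z, fun _ => none⟩

/-- `Z` is a signed zero forcing set of the pattern `P`. -/
def SignedZFS {n : ℕ} (P : Fin n → Fin n → SignPatEntry) (Z : Finset (Fin n)) : Prop :=
  ∃ c : Config n, Relation.ReflTransGen (Step P) (initConfig Z) c ∧ c.black = Finset.univ

/-- The negative looped pattern `P⁻`: off-diagonal as `P`; diagonal `-` if
`P i i ∈ {0,-}`, and `?` if `P i i ∈ {+,?}`. -/
def negLooped {n : ℕ} (P : Fin n → Fin n → SignPatEntry) :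
    Fin n → Fin n → SignPatEntry := fun i j =>
  if i = j then
    (match P i i with
      | SignPatEntry.zero => SignPatEntry.neg
      | SignPatEntry.neg => SignPatEntry.neg
      | _ => SignPatEntry.unk)
  else P i j

/-- The positive looped pattern `P⁺`: off-diagonal as `P`; diagonal `+` if
`P i i ∈ {0,+}`, and `?` if `P i i ∈ {-,?}`. -/
def posLooped {n : ℕ} (P : Fin n → Fin n → SignPatEntry) :
    Fin n → Fin n → SignPatEntry := fun i j =>
  if i = j then
    (match P i i with
      | SignPatEntry.zero => SignPatEntry.pos
      | SignPatEntry.pos => SignPatEntry.pos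
      | _ => SignPatEntry.unk)
  else P i j

/-- The sign of a real number, as a sign-pattern entry. -/
noncomputable def sgnR (x : ℝ) : SignPatEntry :=
  if 0 < x then SignPatEntry.pos else if x < 0 then SignPatEntry.neg else SignPatEntry.zero

/-! ### Auxiliary development for the proof -/

namespace SZFSProof

open Finset

/-- Real interpretation of a strict sign. -/
def toR : SignPatEntry → ℝ
  | .pos => 1
  | .neg => -1
  | _ => 0

lemma toR_inv (s : SignPatEntry) : toR s.inv = - toR s := by
  cases s <;> simp [toR, SignPatEntry.inv]

lemma toR_mul {s : SignPatEntry} (hs : s = .pos ∨ s = .neg) (t : SignPatEntry) :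
    toR (s.mul t) = toR s * toR t := by
  rcases hs with h | h <;> subst h <;> cases t <;>
    simp [toR, SignPatEntry.mul, SignPatEntry.inv]

lemma inv_strict {s : SignPatEntry} (hs : s = .pos ∨ s = .neg) :
    s.inv = .pos ∨ s.inv = .neg := by
  rcases hs with h | h <;> subst h <;> simp [SignPatEntry.inv]

lemma mem_Wset {n : ℕ} {P : Fin n → Fin n → SignPatEntry} {c : Config n} {v u : Fin n} :
    u ∈ Wset P c v ↔ u ∉ c.black ∧ P u v ≠ SignPatEntry.zero := by
  simp [Wset]

/-- On a white out-neighbor of an admissible pivot, the pattern entry is strict. -/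
lemma wset_sign {n : ℕ} {P : Fin n → Fin n → SignPatEntry}
    (hP : ∀ i j : Fin n, i ≠ j → P i j ≠ SignPatEntry.unk)
    {c : Config n} {v : Fin n} (hv : v ∈ c.black ∨ P v v ≠ SignPatEntry.unk)
    {u : Fin n} (hu : u ∈ Wset P c v) :
    P u v = .pos ∨ P u v = .neg := by
  rw [mem_Wset] at hu
  obtain ⟨hb, hz⟩ := hu
  by_cases huv : u = v
  · subst huv
    rcases hv with h | h
    · exact absurd h hb
    · cases h' : P u u <;> simp_all
  · have := hP u v huv
    cases h' : P u v <;> simp_all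

lemma entry_pos {n : ℕ} {P : Fin n → Fin n → SignPatEntry}
    {A : Matrix (Fin n) (Fin n) ℝ} (hA : QClass P A) {u v : Fin n}
    (hs : P u v = .pos ∨ P u v = .neg) : 0 < toR (P u v) * A u v := by
  have h := hA u v
  rcases hs with h' | h' <;> rw [h'] at h ⊢ <;>
    simp [toR, matchesSign] at h ⊢ <;> linarith

/-- Invariant of the game relative to a left null vector `ν`. -/
def Inv {n : ℕ} (c : Config n) (ν : Fin n → ℝ) : Prop :=
  (∀ u ∈ c.black, ν u = 0) ∧ ∃ ε : ℝ, (ε = 1 ∨ ε = -1) ∧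
    ∀ u s, c.mark u = some s → (0 < toR s * (ε * ν u)) ∨ ν u = 0

/-- The pivot relation: the left-null equation restricted to white out-neighbors. -/
lemma pivot_sum {n : ℕ} {P : Fin n → Fin n → SignPatEntry}
    {A : Matrix (Fin n) (Fin n) ℝ} (hA : QClass P A) {ν : Fin n → ℝ}
    (hν : Matrix.vecMul ν A = 0) {c : Config n}
    (hblack : ∀ u ∈ c.black, ν u = 0) (v : Fin n) :
    ∑ u ∈ Wset P c v, ν u * A u v = 0 := by
  have h0 : ∑ u : Fin n, ν u * A u v = 0 := by
    have := congrFun hν v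
    simpa [Matrix.vecMul, dotProduct] using this
  rw [← h0]
  refine Finset.sum_subset (Finset.subset_univ _) ?_
  intro u _ hu
  rw [mem_Wset] at hu
  by_cases hb : u ∈ c.black
  · simp [hblack u hb]
  · have hz : P u v = SignPatEntry.zero := by
      by_contra h
      exact hu ⟨hb, h⟩
    have := hA u v
    rw [hz] at this
    simp [matchesSign] at this
    simp [this]

/-- If, up to a sign `δ`, every white out-neighbor `u` of the pivot contributes
nonnegatively (strictly when `ν u ≠ 0`), all those `ν u` vanish. -/
lemma force_zero {n : ℕ} {P : Fin n → Fin n → SignPatEntry}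
    {A : Matrix (Fin n) (Fin n) ℝ} (hA : QClass P A) {ν : Fin n → ℝ}
    (hν : Matrix.vecMul ν A = 0) {c : Config n}
    (hblack : ∀ u ∈ c.black, ν u = 0) {v : Fin n} (δ : ℝ)
    (hpt : ∀ u ∈ Wset P c v, ν u = 0 ∨ 0 < δ * (ν u * A u v)) :
    ∀ u ∈ Wset P c v, ν u = 0 := by
  have hsum := pivot_sum hA hν hblack v
  have h1 : ∑ u ∈ Wset P c v, δ * (ν u * A u v) = 0 := by
    rw [← Finset.mul_sum, hsum, mul_zero]
  have h2 : ∀ u ∈ Wset P c v, 0 ≤ δ * (ν u * A u v) := by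
    intro u hu
    rcases hpt u hu with h | h
    · simp [h]
    · linarith
  intro u hu
  have h3 := (Finset.sum_eq_zero_iff_of_nonneg h2).mp h1 u hu
  rcases hpt u hu with h | h
  · exact h
  · rw [h3] at h; exact absurd h (lt_irrefl 0)

/-- One step of the game preserves the invariant. -/
lemma step_inv {n : ℕ} {P : Fin n → Fin n → SignPatEntry}
    (hP : ∀ i j : Fin n, i ≠ j → P i j ≠ SignPatEntry.unk)
    {A : Matrix (Fin n) (Fin n) ℝ} (hA : QClass P A) {ν : Fin n → ℝ}
    (hν : Matrix.vecMul ν A = 0) {c c' : Config n}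
    (h : Step P c c') (hI : Inv c ν) : Inv c' ν := by
  obtain ⟨hblack, ε, hε, hm⟩ := hI
  cases h with
  | force1 v u hv hW =>
      have huW : u ∈ Wset P c v := hW ▸ Finset.mem_singleton_self u
      have hsum := pivot_sum hA hν hblack v
      rw [hW, Finset.sum_singleton] at hsum
      have hs := wset_sign hP hv huW
      have hApos := entry_pos hA hs
      have hu0 : ν u = 0 := by
        rcases hs with h' | h' <;> rw [h'] at hApos <;> simp [toR] at hApos <;>
          · rcases mul_eq_zero.mp hsum with h | h
            · exact h
            · exfalso; rw [h] at hApos; linarith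
      refine ⟨?_, ε, hε, hm⟩
      intro x hx
      rcases Finset.mem_insert.mp hx with h | h
      · exact h ▸ hu0
      · exact hblack x h
  | force2 v hv hall =>
      have key : ∀ u ∈ Wset P c v, ν u = 0 := by
        rcases hall with hall | hall
        · refine force_zero hA hν hblack ε ?_
          intro u hu
          have hs := wset_sign hP hv hu
          have hApos := entry_pos hA hs
          rcases hm u (P u v) (hall u hu) with h | h
          · right
            rcases hs with h' | h' <;> rw [h'] at h hApos <;>
              simp [toR] at h hApos <;> nlinarith
          · left; exact h
        · refine force_zero hA hν hblack (-ε) ?_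
          intro u hu
          have hs := wset_sign hP hv hu
          have hApos := entry_pos hA hs
          rcases hm u (P u v).inv (hall u hu) with h | h
          · right
            rw [toR_inv] at h
            rcases hs with h' | h' <;> rw [h'] at h hApos <;>
              simp [toR] at h hApos <;> nlinarith
          · left; exact h
      refine ⟨?_, ε, hε, hm⟩
      intro x hx
      rcases Finset.mem_union.mp hx with h | h
      · exact hblack x h
      · exact key x h
  | force3 v w s hv hs hw hwnone hmarked hex =>
      refine ⟨hblack, ε, hε, ?_⟩
      -- terms other than w contribute with a fixed sign
      have hterm : ∀ u ∈ Wset P c v, u ≠ w →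
          0 ≤ (toR s * ε) * (ν u * A u v) := by
        intro u hu hne
        have hsu := wset_sign hP hv hu
        have hApos := entry_pos hA hsu
        rcases hm u _ (hmarked u hu hne) with h | h
        · rw [toR_mul hs] at h
          rcases hs with h1 | h1 <;> rcases hsu with h2 | h2 <;>
            rw [h1] at h ⊢ <;> rw [h2] at h hApos <;>
            simp [toR] at h hApos ⊢ <;> nlinarith
        · simp [h]
      have hsum := pivot_sum hA hν hblack v
      have hwle : (toR s * ε) * (ν w * A w v) ≤ 0 := by
        have htot : ∑ u ∈ Wset P c v, (toR s * ε) * (ν u * A u v) = 0 := by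
          rw [← Finset.mul_sum, hsum, mul_zero]
        have hsplit : ∑ u ∈ (Wset P c v).erase w, (toR s * ε) * (ν u * A u v)
            + (toR s * ε) * (ν w * A w v) = 0 := by
          rw [Finset.sum_erase_add _ _ hw]; exact htot
        have hnn : 0 ≤ ∑ u ∈ (Wset P c v).erase w, (toR s * ε) * (ν u * A u v) := by
          refine Finset.sum_nonneg ?_
          intro u hu
          exact hterm u (Finset.mem_of_mem_erase hu) (Finset.ne_of_mem_erase hu)
        linarith
      intro x t hx
      by_cases hxw : x = w
      · subst hxw
        have hx2 : Function.update c.mark x (some ((s.inv).mul (P x v))) x = some t := hx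
        rw [Function.update_self] at hx2
        have ht : t = (s.inv).mul (P x v) := by
          injection hx2 with h; exact h.symm
        subst ht
        by_cases hx0 : ν x = 0
        · right; exact hx0
        · left
          have hsx := wset_sign hP hv hw
          have hApos := entry_pos hA hsx
          rw [toR_mul (inv_strict hs), toR_inv]
          have hAne : A x v ≠ 0 := by
            intro h0
            rw [h0, mul_zero] at hApos
            exact lt_irrefl 0 hApos
          have hne : (toR s * ε) * (ν x * A x v) ≠ 0 := by
            rcases hε with h | h <;> rcases hs with h1 | h1 <;> subst h <;> rw [h1] <;>
              simp [toR, hx0, hAne]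
          have hlt : (toR s * ε) * (ν x * A x v) < 0 := lt_of_le_of_ne hwle hne
          rcases hs with h1 | h1 <;> rcases hsx with h2 | h2 <;>
            rw [h1] at hlt ⊢ <;> rw [h2] at hApos ⊢ <;>
            simp [toR] at hlt hApos ⊢ <;> nlinarith
      · have hx2 : Function.update c.mark w (some ((s.inv).mul (P w v))) x = some t := hx
        rw [Function.update_of_ne hxw] at hx2
        exact hm x t hx2
  | force4 u hnomark hu =>
      refine ⟨hblack, if 0 < ν u then 1 else -1, ?_, ?_⟩
      · split <;> simp
      · intro x t hx
        by_cases hxu : x = u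
        · subst hxu
          have hx2 : Function.update c.mark x (some SignPatEntry.pos) x = some t := hx
          rw [Function.update_self] at hx2
          have ht : t = SignPatEntry.pos := by injection hx2 with h; exact h.symm
          subst ht
          rcases lt_trichotomy (ν x) 0 with h | h | h
          · left; rw [if_neg (by linarith)]; simp [toR]; linarith
          · right; exact h
          · left; rw [if_pos h]; simp [toR]; linarith
        · have hx2 : Function.update c.mark u (some SignPatEntry.pos) x = some t := hx
          rw [Function.update_of_ne hxu] at hx2
          have hxb : x ∈ c.black := by
            by_contra hb
            rw [hnomark x hb] at hx2
            exact absurd hx2 (by simp)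
          right; exact hblack x hxb

end SZFSProof

/-- If `V_C` is a signed zero forcing set of `P_s`, then every `ν` with
`νᵀ A = 0` for `A ∈ Q_s(P_s)` vanishing on `V_C` is zero; equivalently (PBH test), the
eigenvalue `0` of every `A ∈ Q_s(P_s)` is controllable for the input set `V_C`. -/
theorem stmt5 {n : ℕ} (P : Fin n → Fin n → SignPatEntry)
    (hP : ∀ i j : Fin n, i ≠ j → P i j ≠ SignPatEntry.unk)
    (VC : Finset (Fin n)) (hVC : SignedZFS P VC) :
    (∀ A : Matrix (Fin n) (Fin n) ℝ, QClass P A →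
      ∀ ν : Fin n → ℝ,
        Matrix.vecMul ν A = 0 → (∀ j ∈ VC, ν j = 0) → ν = 0) ∧
    (∀ A : Matrix (Fin n) (Fin n) ℝ, QClass P A →
      ∀ w : Fin n → ℂ, w ≠ 0 →
        Matrix.vecMul w (A.map (Complex.ofReal ·)) = 0 →
        ∃ j ∈ VC, w j ≠ 0) := by
  have part1 : ∀ A : Matrix (Fin n) (Fin n) ℝ, QClass P A →
      ∀ ν : Fin n → ℝ,
        Matrix.vecMul ν A = 0 → (∀ j ∈ VC, ν j = 0) → ν = 0 := by
    intro A hA ν hν hZ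
    obtain ⟨c, hrt, hall⟩ := hVC
    have hinit : SZFSProof.Inv (initConfig VC) ν := by
      refine ⟨hZ, 1, Or.inl rfl, ?_⟩
      intro u s h
      exact absurd h (by simp [initConfig])
    have hfin : SZFSProof.Inv c ν := by
      clear hall
      induction hrt with
      | refl => exact hinit
      | tail _ hstep ih => exact SZFSProof.step_inv hP hA hν hstep ih
    funext x
    exact hfin.1 x (hall ▸ Finset.mem_univ x)
  refine ⟨part1, ?_⟩
  intro A hA w hw hvm
  by_contra hcon
  push_neg at hcon
  have hcol : ∀ v : Fin n, ∑ u : Fin n, w u * (A u v : ℂ) = 0 := by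
    intro v
    have := congrFun hvm v
    simpa [Matrix.vecMul, dotProduct, Matrix.map] using this
  have hre : Matrix.vecMul (fun j => (w j).re) A = 0 := by
    funext v
    have := congrArg Complex.re (hcol v)
    rw [Complex.re_sum] at this
    simpa [Matrix.vecMul, dotProduct, Complex.mul_re] using this
  have him : Matrix.vecMul (fun j => (w j).im) A = 0 := by
    funext v
    have := congrArg Complex.im (hcol v)
    rw [Complex.im_sum] at this
    simpa [Matrix.vecMul, dotProduct, Complex.mul_im] using this
  have hre0 := part1 A hA _ hre (fun j hj => by rw [hcon j hj]; simp)
  have him0 := part1 A hA _ him (fun j hj => by rw [hcon j hj]; simp)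
  apply hw
  funext j
  have h1 : (w j).re = 0 := congrFun hre0 j
  have h2 : (w j).im = 0 := congrFun him0 j
  exact Complex.ext h1 h2
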